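/- arXiv:2410.15000 — 2 statements merged into one kernel-verified Lean document; each statement's English description precedes it below -/
import Mathlib

section
/- Let G be a finite simple connected graph of order n and diameter d. If d is not congruent to 1 modulo 3 (equivalently, −1 is not an eigenvalue of the path on d + 1 vertices), then m_G(−1) ≤ n − d − 1. -/
attribute [local instance] Classical.propDecidable

/-- The multiplicity of `-1` as an eigenvalue of the adjacency matrix of `G`,
i.e. the dimension over `ℝ` of the kernel of `A + I`. -/
noncomputable def multNegOne {V : Type*} [Fintype V] (G : SimpleGraph V) : ℕ :=
  Module.finrank ℝ (LinearMap.ker (Matrix.toLin' (G.adjMatrix ℝ + 1)))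

/-!
Along a shortest walk between two vertices at distance `d`, the distance between the `i`-th and
the `j`-th vertex is `|i - j|`, so the walk spans an induced path `P_{d+1}`. The corresponding
principal submatrix of `A + I` is `A(P_{d+1}) + I`, and a vector in its kernel satisfies
`x_{i-1} + x_i + x_{i+1} = 0` with zero boundary values; such a sequence is 3-periodic and must
vanish unless `d ≡ 1 [MOD 3]`. Hence `rank (A + I) ≥ d + 1`, that is `m_G(-1) ≤ n - d - 1`.
-/

open Matrix

theorem eq_zero_of_add_add_eq_zero {M : Type*} [AddCommGroup M] {n : ℕ} (hn : n % 3 ≠ 2)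
    {z : ℕ → M} (h0 : z 0 = 0) (hlast : z (n + 1) = 0)
    (hsum : ∀ i < n, z i + z (i + 1) + z (i + 2) = 0) (k : ℕ) (hk : k ≤ n + 1) : z k = 0 := by
  have hperiodic : ∀ k ≤ n + 1, z k = z (k % 3) := by
    intro k hk
    induction k using Nat.strong_induction_on with
    | _ k ih =>
      match k with
      | 0 | 1 | 2 => rfl
      | m + 3 =>
        have h₁ := hsum m (by omega)
        have h₂ := hsum (m + 1) (by omega)
        calc z (m + 3)
            = (z (m + 1) + z (m + 2) + z (m + 3)) - (z m + z (m + 1) + z (m + 2)) + z m := by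
              abel
          _ = z (m % 3) := by rw [h₁, h₂, sub_zero, zero_add, ih m (by omega) (by omega)]
          _ = z ((m + 3) % 3) := by rw [Nat.add_mod_right]
  have h₂ : 0 < n → z 2 = -z 1 := fun hn ↦ by
    have := hsum 0 hn
    rw [h0, zero_add] at this
    exact eq_neg_of_add_eq_zero_right this
  have h₁ : z 1 = 0 := by
    rw [hperiodic (n + 1) le_rfl] at hlast
    rcases (by omega : (n + 1) % 3 = 1 ∨ (n + 1) % 3 = 2) with h | h
    · rwa [h] at hlast
    · rwa [h, h₂ (by omega), neg_eq_zero] at hlast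
  rw [hperiodic k hk]
  rcases (by omega : k % 3 = 0 ∨ k % 3 = 1 ∨ k % 3 = 2) with h | h | h
  · rw [h, h0]
  · rw [h, h₁]
  · rw [h, h₂ (by omega), h₁, neg_zero]

/-- The sequence `0, x 0, …, x (n - 1), 0, 0, …`. -/
def Fin.padWithZeros {R : Type*} [AddCommMonoid R] {n : ℕ} (x : Fin n → R) (k : ℕ) : R :=
  ∑ j : Fin n, if (j : ℕ) + 1 = k then x j else 0

namespace Fin

variable {R : Type*} [AddCommMonoid R] {n : ℕ} (x : Fin n → R)

@[simp]
theorem padWithZeros_zero : padWithZeros x 0 = 0 := by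
  simp [padWithZeros]

@[simp]
theorem padWithZeros_succ (i : Fin n) : padWithZeros x (i + 1) = x i := by
  simp [padWithZeros, Fin.val_inj]

theorem padWithZeros_of_lt {k : ℕ} (hk : n < k) : padWithZeros x k = 0 :=
  Finset.sum_eq_zero fun j _ ↦ if_neg (by omega)

end Fin

namespace SimpleGraph

variable {V : Type*} {G : SimpleGraph V} {u v : V}

theorem Walk.dist_getVert_getVert_of_le {p : G.Walk u v} (hp : p.length = G.dist u v)
    {i j : ℕ} (hij : i ≤ j) (hj : j ≤ p.length) :
    G.dist (p.getVert i) (p.getVert j) = j - i := by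
  have hsub : ((p.take j).drop i).IsSubwalk p := (isSubwalk_drop _ i).trans (p.isSubwalk_take j)
  have := length_eq_dist_of_subwalk hp hsub
  rwa [drop_length, take_length, take_getVert, min_eq_left hj, min_eq_right hij, eq_comm] at this

theorem Walk.dist_getVert_getVert {p : G.Walk u v} (hp : p.length = G.dist u v) {i j : ℕ}
    (hi : i ≤ p.length) (hj : j ≤ p.length) :
    G.dist (p.getVert i) (p.getVert j) = i - j + (j - i) := by
  rcases le_total i j with hij | hji
  · rw [dist_getVert_getVert_of_le hp hij hj]; omega
  · rw [dist_comm, dist_getVert_getVert_of_le hp hji hi]; omega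

def Walk.pathGraphEmbeddingOfLengthEqDist (p : G.Walk u v) (hp : p.length = G.dist u v) :
    pathGraph (p.length + 1) ↪g G where
  toFun i := p.getVert i
  inj' i j hij := by
    have := p.dist_getVert_getVert hp (i := i) (j := j) (by omega) (by omega)
    simp only [hij, dist_self] at this
    exact Fin.ext (by omega)
  map_rel_iff' {i j} := by
    change G.Adj (p.getVert i) (p.getVert j) ↔ _
    rw [← dist_eq_one_iff_adj, pathGraph_adj, p.dist_getVert_getVert hp (by omega) (by omega)]
    omega

theorem adjMatrix_pathGraph_mulVec_apply {R : Type*} [NonAssocSemiring R] {n : ℕ}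
    (x : Fin n → R) (i : Fin n) :
    ((pathGraph n).adjMatrix R *ᵥ x) i = Fin.padWithZeros x i + Fin.padWithZeros x (i + 2) := by
  have hsplit : ∀ j : Fin n, (if (pathGraph n).Adj i j then x j else 0) =
      (if (j : ℕ) + 1 = i then x j else 0) + (if (j : ℕ) + 1 = i + 2 then x j else 0) := by
    intro j
    rw [pathGraph_adj]
    split_ifs <;> first | omega | simp
  simp only [mulVec, dotProduct, adjMatrix_apply, ite_mul, one_mul, zero_mul, hsplit,
    Finset.sum_add_distrib, Fin.padWithZeros]

theorem eq_zero_of_adjMatrix_pathGraph_mulVec_add_self_eq_zero {R : Type*} [Ring R] {n : ℕ}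
    (hn : n % 3 ≠ 2) {x : Fin n → R} (hx : (pathGraph n).adjMatrix R *ᵥ x + x = 0) : x = 0 := by
  have hpad := eq_zero_of_add_add_eq_zero hn (Fin.padWithZeros_zero x)
    (Fin.padWithZeros_of_lt x n.lt_succ_self) fun i hi ↦ by
      have hrow := congrFun hx ⟨i, hi⟩
      rw [Pi.add_apply, adjMatrix_pathGraph_mulVec_apply, ← Fin.padWithZeros_succ x,
        Pi.zero_apply] at hrow
      rw [← hrow]
      abel
  ext j
  rw [← Fin.padWithZeros_succ x j]
  exact hpad _ (by omega)

theorem multNegOne_pathGraph {n : ℕ} (hn : n % 3 ≠ 2) : multNegOne (pathGraph n) = 0 := by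
  rw [multNegOne, Submodule.finrank_eq_zero, LinearMap.ker_eq_bot']
  intro x hx
  simp only [toLin'_apply, add_mulVec, one_mulVec] at hx
  exact eq_zero_of_adjMatrix_pathGraph_mulVec_add_self_eq_zero hn hx

variable (G) in
theorem rank_adjMatrix_add_one_add_multNegOne [Fintype V] :
    (G.adjMatrix ℝ + 1).rank + multNegOne G = Fintype.card V := by
  rw [multNegOne, Matrix.rank, ← toLin'_apply', LinearMap.finrank_range_add_finrank_ker,
    Module.finrank_fintype_fun_eq_card]

theorem Embedding.multNegOne_add_card_le {W : Type*} [Fintype V] [Fintype W]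
    {H : SimpleGraph W} (f : H ↪g G) :
    multNegOne G + Fintype.card W ≤ Fintype.card V + multNegOne H := by
  have hsub : (G.adjMatrix ℝ + 1).submatrix f f = H.adjMatrix ℝ + 1 := by
    ext i j
    simp [one_apply]
  have hrank := rank_submatrix_le (G.adjMatrix ℝ + 1) f f
  rw [hsub] at hrank
  have hG := rank_adjMatrix_add_one_add_multNegOne G
  have hH := rank_adjMatrix_add_one_add_multNegOne H
  omega

end SimpleGraph

theorem stmt_3_general {V : Type*} [Fintype V] (G : SimpleGraph V) (n d : ℕ)
    (hconn : G.Connected)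
    (hcard : Fintype.card V = n)
    (hd3 : d % 3 ≠ 1)
    (hdiam_ex : ∃ a b : V, G.dist a b = d) :
    multNegOne G ≤ n - d - 1 := by
  obtain ⟨a, b, hab⟩ := hdiam_ex
  obtain ⟨p, hp⟩ := hconn.exists_walk_length_eq_dist a b
  have hpath := (p.pathGraphEmbeddingOfLengthEqDist hp).multNegOne_add_card_le
  rw [hp, hab] at hpath
  rw [SimpleGraph.multNegOne_pathGraph (by omega), Fintype.card_fin, hcard] at hpath
  omega

theorem stmt_3 {V : Type*} [Fintype V] (G : SimpleGraph V) (n d : ℕ)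
    (hconn : G.Connected)
    (hcard : Fintype.card V = n)
    (hd3 : d % 3 ≠ 1)
    (hdiam_le : ∀ a b : V, G.dist a b ≤ d)
    (hdiam_ex : ∃ a b : V, G.dist a b = d) :
    multNegOne G ≤ n - d - 1 :=
  stmt_3_general G n d hconn hcard hd3 hdiam_ex
end

section
/- Let G be a finite simple connected C-canonical graph of order n and diameter d with d ≡ 2 (mod 3) and m_G(−1) = n − d − 1, and let P = v_1 v_2 ⋯ v_{d+1} be a diameter path of G. Then no vertex of G outside P has exactly one neighbor on P; that is, every vertex not on P has exactly two neighbors among the vertices of P. -/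
attribute [local instance] Classical.propDecidable

/-- The set of indices `i ∈ {1, …, d+1}` such that `x` is adjacent to the vertex `v i`
of the diameter path `v 1, v 2, …, v (d+1)`. -/
noncomputable def pathNbrs {V : Type*} (G : SimpleGraph V) (d : ℕ) (v : ℕ → V) (x : V) :
    Finset ℕ :=
  (Finset.Icc 1 (d + 1)).filter fun i => G.Adj x (v i)

/-!
Put `m = d + 1 ≡ 0 (mod 3)` and `T = P ∪ {x}`. Since `m_G(-1) = n - m`, the kernel of `A + I`
has larger dimension than the number of vertices outside `T`, so it contains a nonzero vector `u`
supported on `T`. Writing `a = u x` and `f j = u (v j)`, padded by `f 0 = f (m + 1) = 0`, the rows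
of `(A + I) u = 0` at the path vertices read `f (i - 1) + f i + f (i + 1) = -a [x ~ v i]`, and the
row at `x` reads `a + ∑_{x ~ v j} f j = 0`. As `P` is geodesic, the neighbours of `x` on `P` lie
in a window of three consecutive indices; outside it every three consecutive terms of `f` sum to
zero, so `f` is `3`-periodic there. Because `m + 1 ≢ 0 (mod 3)`, this forces `u = 0` when `x` has
at most one neighbour on `P`, and `u = a (e_x - e_{v (p + 1)})` when its neighbours are
`v p, v (p + 1), v (p + 2)`; then the columns of `A + I` at `x` and `v (p + 1)` agree, i.e.
`N[x] = N[v (p + 1)]`, contradicting C-canonicity.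
-/

theorem Submodule.exists_mem_ne_zero_forall_notMem_eq_zero {K V : Type*} [Field K] [Fintype V]
    [DecidableEq V] (W : Submodule K (V → K)) (T : Finset V)
    (h : Fintype.card V < Module.finrank K W + T.card) :
    ∃ u ∈ W, u ≠ 0 ∧ ∀ z ∉ T, u z = 0 := by
  let L : W →ₗ[K] ((Tᶜ : Finset V) → K) :=
    (LinearMap.funLeft K K ((↑) : (Tᶜ : Finset V) → V)).comp W.subtype
  have hL : Module.finrank K ((Tᶜ : Finset V) → K) < Module.finrank K W := by
    have := T.card_le_univ
    simp only [Module.finrank_fintype_fun_eq_card, Fintype.card_coe, Finset.card_compl]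
    omega
  obtain ⟨w, hw, hw0⟩ :=
    (Submodule.ne_bot_iff _).mp (LinearMap.ker_ne_bot_of_finrank_lt (f := L) hL)
  refine ⟨w, w.2, fun h0 => hw0 (Subtype.ext h0), fun z hz => ?_⟩
  simpa [L] using congrFun (LinearMap.mem_ker.mp hw) ⟨z, Finset.mem_compl.mpr hz⟩

theorem Finset.sum_univ_eq_add_sum_of_eq_zero {ι V M : Type*} [Fintype V] [DecidableEq V]
    [AddCommMonoid M] {s : Finset ι} {v : ι → V} {x : V} {g : V → M} (hv : Set.InjOn v s)
    (hx : x ∉ s.image v) (hg : ∀ z ∉ insert x (s.image v), g z = 0) :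
    ∑ z, g z = g x + ∑ i ∈ s, g (v i) := by
  rw [← Finset.sum_image hv, ← Finset.sum_insert hx]
  exact (Finset.sum_subset (Finset.subset_univ _) fun z _ hz => hg z hz).symm

theorem Finset.exists_subset_Icc_of_forall_le_add {N : Finset ℕ} (hN : N.Nonempty) {k : ℕ}
    (h : ∀ i ∈ N, ∀ j ∈ N, j ≤ i + k) : ∃ p, N ⊆ Finset.Icc p (p + k) :=
  ⟨N.min' hN, fun j hj => Finset.mem_Icc.mpr ⟨N.min'_le j hj, h _ (N.min'_mem hN) j hj⟩⟩

open Matrix in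
theorem Matrix.exists_forall_mul_add_sum_eq_zero {ι V K : Type*} [DecidableEq ι] [Fintype V]
    [DecidableEq V] [Field K] (M : Matrix V V K) {s : Finset ι} {v : ι → V} {x : V}
    (hv : Set.InjOn v s) (hx : ∀ i ∈ s, x ≠ v i)
    (h : Fintype.card V < Module.finrank K (LinearMap.ker (Matrix.toLin' M)) + s.card + 1) :
    ∃ (a : K) (f : ι → K), ¬ (a = 0 ∧ ∀ i ∈ s, f i = 0) ∧ (∀ i ∉ s, f i = 0) ∧
      ∀ w, M w x * a + ∑ i ∈ s, M w (v i) * f i = 0 := by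
  have hxs : x ∉ s.image v := by
    simpa only [Finset.mem_image, not_exists, not_and] using fun i hi hxi => hx i hi hxi.symm
  obtain ⟨u, hu, hu0, hsupp⟩ := Submodule.exists_mem_ne_zero_forall_notMem_eq_zero _
    (insert x (s.image v))
    (by rwa [Finset.card_insert_of_notMem hxs, Finset.card_image_of_injOn hv, ← add_assoc])
  refine ⟨u x, fun i => if i ∈ s then u (v i) else 0, ?_, fun i hi => if_neg hi, fun w => ?_⟩
  · rintro ⟨hx0, hf0⟩
    refine hu0 (funext fun z => ?_)
    by_cases hz : z ∈ insert x (s.image v)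
    · rcases Finset.mem_insert.mp hz with rfl | hz
      · exact hx0
      · obtain ⟨i, hi, rfl⟩ := Finset.mem_image.mp hz
        simpa [hi] using hf0 i hi
    · exact hsupp z hz
  · have hw : (M *ᵥ u) w = 0 := congrFun (LinearMap.mem_ker.mp hu) w
    rw [Matrix.mulVec, dotProduct, Finset.sum_univ_eq_add_sum_of_eq_zero hv hxs fun z hz => by
      rw [hsupp z hz, mul_zero]] at hw
    refine Eq.trans ?_ hw
    congr 1
    exact Finset.sum_congr rfl fun i hi => by simp [hi]

theorem Matrix.apply_eq_apply_of_forall_mul_add_sum_eq_zero {ι V R : Type*} [DecidableEq ι]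
    [Ring R] [NoZeroDivisors R] (M : Matrix V V R) {s : Finset ι} {v : ι → V} {y : V} {q : ι}
    (hq : q ∈ s) {a : R} (ha : a ≠ 0) {f : ι → R}
    (hf : ∀ i ∈ s, f i = if i = q then -a else 0)
    (h : ∀ w, M w y * a + ∑ i ∈ s, M w (v i) * f i = 0) (w : V) : M w y = M w (v q) := by
  have hw := h w
  rw [Finset.sum_congr rfl fun i hi => by rw [hf i hi, mul_ite, mul_zero],
    Finset.sum_ite_eq' s q, if_pos hq, mul_neg, ← sub_eq_add_neg, ← sub_mul] at hw
  exact sub_eq_zero.mp ((mul_eq_zero.mp hw).resolve_right ha)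

section ThreeTermRecurrence

variable {M : Type*} [AddCommGroup M] {f : ℕ → M}

theorem apply_eq_of_add_add_eq_zero {l r : ℕ}
    (h : ∀ i, l ≤ i → i + 2 ≤ r → f i + f (i + 1) + f (i + 2) = 0)
    {i j : ℕ} (hl : l ≤ i) (hij : i ≤ j) (hr : j ≤ r) (hmod : i % 3 = j % 3) :
    f j = f i := by
  obtain ⟨k, rfl⟩ : ∃ k, j = i + 3 * k := ⟨(j - i) / 3, by omega⟩
  clear hij hmod
  induction k with
  | zero => rfl
  | succ k ih =>
    set j := i + 3 * k
    have h₁ := h j (by omega) (by omega)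
    have h₂ := h (j + 1) (by omega) (by omega)
    rw [show i + 3 * (k + 1) = j + 1 + 2 by omega, ← ih (by omega)]
    calc f (j + 1 + 2)
        = (f (j + 1) + f (j + 1 + 1) + f (j + 1 + 2)) - (f (j + 1) + f (j + 2)) := by abel
      _ = f j := by rw [h₂, ← h₁]; abel

theorem eq_zero_of_add_add_eq_zero_s7 {k : ℕ} (hk : k % 3 ≠ 0) (h₀ : f 0 = 0) (hₖ : f k = 0)
    (h : ∀ i, i + 2 ≤ k → f i + f (i + 1) + f (i + 2) = 0) {i : ℕ} (hi : i ≤ k) :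
    f i = 0 := by
  have hmod : ∀ j ≤ k, f j = f (j % 3) := fun j hj =>
    apply_eq_of_add_add_eq_zero (l := 0) (fun i _ => h i) (Nat.zero_le _) (Nat.mod_le j 3) hj
      (Nat.mod_mod j 3)
  have hkr : f (k % 3) = 0 := hmod k le_rfl ▸ hₖ
  have h₀₁₂ : 2 ≤ k → f 0 + f 1 + f 2 = 0 := h 0
  rw [hmod i hi]
  clear h hmod
  grind

theorem eq_zero_of_add_add_eq_zero_of_ne [IsAddTorsionFree M] {k p : ℕ} (hk : k % 3 = 1)
    (h₀ : f 0 = 0) (hₖ : f k = 0) (hp : 1 ≤ p) (hpk : p < k)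
    (h : ∀ i, i + 2 ≤ k → i + 1 ≠ p → f i + f (i + 1) + f (i + 2) = 0)
    (hp' : f (p - 1) + f (p + 1) = 0) : f p = 0 := by
  have hleft : ∀ i, 0 ≤ i → i + 2 ≤ p → f i + f (i + 1) + f (i + 2) = 0 :=
    fun i _ hi => h i (by omega) (by omega)
  have hright : ∀ i, p ≤ i → i + 2 ≤ k → f i + f (i + 1) + f (i + 2) = 0 :=
    fun i hi hik => h i hik (by omega)
  rcases (by omega : p % 3 = 0 ∨ p % 3 = 1 ∨ p % 3 = 2) with hr | hr | hr
  · rw [apply_eq_of_add_add_eq_zero hleft le_rfl (Nat.zero_le p) le_rfl (by omega), h₀]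
  · rw [← apply_eq_of_add_add_eq_zero hright le_rfl hpk.le le_rfl (by omega), hₖ]
  · -- the recurrence gives `f (p - 1) = -f p` from the left and `f (p + 1) = -f p` from the
    -- right, so `hp'` reads `-2 f p = 0`
    have hl₁ : f (p - 1) = f 1 :=
      apply_eq_of_add_add_eq_zero hleft (Nat.zero_le 1) (by omega) (by omega) (by omega)
    have hl₂ : f p = f 2 :=
      apply_eq_of_add_add_eq_zero hleft (Nat.zero_le 2) (by omega) le_rfl (by omega)
    have hr₁ : f (k - 2) = f p :=
      apply_eq_of_add_add_eq_zero hright le_rfl (by omega) (by omega) (by omega)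
    have hr₂ : f (k - 1) = f (p + 1) :=
      apply_eq_of_add_add_eq_zero hright (by omega) (by omega) (by omega) (by omega)
    have e₀ := hleft 0 le_rfl (by omega)
    have eₖ := hright (k - 2) (by omega) (by omega)
    rw [show k - 2 + 1 = k - 1 by omega, show k - 2 + 2 = k by omega, hₖ, hr₁, hr₂] at eₖ
    rw [h₀, zero_add, ← hl₁, ← hl₂] at e₀
    grind

end ThreeTermRecurrence

/-- The equations `(A + I) u = 0` in the rows of `P ∪ {x}` for a vector `u` supported on
`P ∪ {x}`, where `a = u x`, `f j = u (v j)` for `1 ≤ j ≤ m`, `f` is padded by zeros at `0` and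
`m + 1`, and `N` is the set of indices of the neighbours of `x` on `P`. -/
structure IsPathSolution {M : Type*} [AddCommGroup M] (m : ℕ) (N : Finset ℕ) (a : M)
    (f : ℕ → M) : Prop where
  subset : N ⊆ Finset.Icc 1 m
  apply_zero : f 0 = 0
  apply_add_one : f (m + 1) = 0
  add_sum : a + ∑ j ∈ N, f j = 0
  add_add_add : ∀ i, i + 2 ≤ m + 1 →
    f i + f (i + 1) + f (i + 2) + (if i + 1 ∈ N then a else 0) = 0

namespace IsPathSolution

variable {M : Type*} [AddCommGroup M] {m : ℕ} {N : Finset ℕ} {a : M} {f : ℕ → M}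

theorem eq_zero_of_eq_zero (hs : IsPathSolution m N a f) (hm : m % 3 = 0) (ha : a = 0)
    {i : ℕ} (hi : i ≤ m + 1) : f i = 0 :=
  eq_zero_of_add_add_eq_zero_s7 (by omega) hs.apply_zero hs.apply_add_one
    (fun j hj => by simpa [ha] using hs.add_add_add j hj) hi

theorem eq_zero_of_card_le_one [IsAddTorsionFree M] (hs : IsPathSolution m N a f)
    (hm : m % 3 = 0) (hN : N.card ≤ 1) : a = 0 := by
  obtain ⟨p, hp⟩ := Finset.card_le_one_iff_subset_singleton.mp hN
  rcases Finset.subset_singleton_iff.mp hp with rfl | rfl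
  · simpa using hs.add_sum
  have hpm := Finset.mem_Icc.mp (hs.subset (Finset.mem_singleton_self p))
  have hx : a + f p = 0 := by simpa using hs.add_sum
  have hfp : f p = 0 := by
    refine eq_zero_of_add_add_eq_zero_of_ne (k := m + 1) (by omega) hs.apply_zero
      hs.apply_add_one hpm.1 (by omega) (fun i hi hip => ?_) ?_
    · simpa [hip] using hs.add_add_add i hi
    · have hv := hs.add_add_add (p - 1) (by omega)
      rw [if_pos (Finset.mem_singleton.mpr (by omega)), show p - 1 + 1 = p by omega,
        show p - 1 + 2 = p + 1 by omega] at hv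
      grind
  simpa [hfp] using hx

theorem eq_ite_of_eq_Icc (hs : IsPathSolution m N a f) (hm : m % 3 = 0) {p : ℕ}
    (hN : N = Finset.Icc p (p + 2)) {i : ℕ} (hi : i ≤ m + 1) :
    f i = if i = p + 1 then -a else 0 := by
  have hpm : 1 ≤ p ∧ p + 2 ≤ m := by
    have h₁ := Finset.mem_Icc.mp (hs.subset (hN ▸ Finset.left_mem_Icc.mpr (by omega)))
    have h₂ := Finset.mem_Icc.mp (hs.subset (hN ▸ Finset.right_mem_Icc.mpr (by omega)))
    omega
  -- adding `a` at `p + 1` absorbs the inhomogeneous terms at `p, p + 1, p + 2`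
  have hg := eq_zero_of_add_add_eq_zero_s7 (f := fun j => f j + if j = p + 1 then a else 0)
    (k := m + 1) (by omega) (by simp [hs.apply_zero]) (by simp [hs.apply_add_one]; omega)
    (fun j hj => by
      have := hs.add_add_add j hj
      simp only [hN, Finset.mem_Icc] at this
      split_ifs at this ⊢ <;> grind) hi
  split_ifs at hg ⊢ <;> [exact eq_neg_of_add_eq_zero_left hg; simpa using hg]

end IsPathSolution

theorem mem_pathNbrs {V : Type*} {G : SimpleGraph V} {d : ℕ} {v : ℕ → V} {x : V} {i : ℕ} :
    i ∈ pathNbrs G d v x ↔ i ∈ Finset.Icc 1 (d + 1) ∧ G.Adj x (v i) :=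
  Finset.mem_filter

namespace SimpleGraph

variable {V : Type*} {G : SimpleGraph V}

theorem adjMatrix_add_one_apply {R : Type*} [Fintype V] [DecidableEq V] [DecidableRel G.Adj]
    [Semiring R] (w z : V) :
    (G.adjMatrix R + 1) w z = if w = z ∨ G.Adj w z then 1 else 0 := by
  by_cases hwz : w = z
  · subst hwz; simp
  · simp [hwz, adjMatrix_apply]

theorem eq_or_adj_iff_of_adjMatrix_add_one_apply_eq {R : Type*} [Fintype V] [DecidableEq V]
    [DecidableRel G.Adj] [Semiring R] [Nontrivial R] {y z : V}
    (h : ∀ w, (G.adjMatrix R + 1) w y = (G.adjMatrix R + 1) w z) (w : V) :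
    (w = y ∨ G.Adj y w) ↔ (w = z ∨ G.Adj z w) := by
  have hw := h w
  simp only [adjMatrix_add_one_apply, G.adj_comm w] at hw
  split_ifs at hw <;> simp_all

def IsGeodesicOn (G : SimpleGraph V) (s : Finset ℕ) (v : ℕ → V) : Prop :=
  ∀ i ∈ s, ∀ j ∈ s, G.dist (v i) (v j) = max i j - min i j

namespace IsGeodesicOn

variable {s : Finset ℕ} {v : ℕ → V}

theorem injOn (hv : G.IsGeodesicOn s v) : Set.InjOn v s := fun i hi j hj hij => by
  have := hv i hi j hj
  rw [hij, dist_self] at this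
  omega

theorem eq_or_adj_iff (hv : G.IsGeodesicOn s v) {i j : ℕ} (hi : i ∈ s) (hj : j ∈ s) :
    (v i = v j ∨ G.Adj (v i) (v j)) ↔ (i ≤ j + 1 ∧ j ≤ i + 1) := by
  rw [← dist_eq_one_iff_adj, hv i hi j hj]
  constructor
  · rintro (h | h)
    · rw [hv.injOn hi hj h]; omega
    · omega
  · intro h
    rcases (by omega : i = j ∨ max i j - min i j = 1) with rfl | h1
    · exact Or.inl rfl
    · exact Or.inr h1

variable {d : ℕ} {x : V}

theorem le_add_two_of_mem_pathNbrs (hv : G.IsGeodesicOn (Finset.Icc 1 (d + 1)) v) {i j : ℕ}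
    (hi : i ∈ pathNbrs G d v x) (hj : j ∈ pathNbrs G d v x) : j ≤ i + 2 := by
  obtain ⟨hi, hxi⟩ := mem_pathNbrs.mp hi
  obtain ⟨hj, hxj⟩ := mem_pathNbrs.mp hj
  have := dist_le (Walk.cons hxi.symm (Walk.cons hxj Walk.nil))
  rw [hv i hi j hj] at this
  simp only [Walk.length_cons, Walk.length_nil] at this
  omega

theorem isPathSolution_pathNbrs [Fintype V] {R : Type*} [Ring R]
    (hv : G.IsGeodesicOn (Finset.Icc 1 (d + 1)) v)
    (hx : ∀ i ∈ Finset.Icc 1 (d + 1), x ≠ v i) {a : R} {f : ℕ → R}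
    (hf : ∀ j ∉ Finset.Icc 1 (d + 1), f j = 0)
    (hrow : ∀ w, (G.adjMatrix R + 1) w x * a +
      ∑ j ∈ Finset.Icc 1 (d + 1), (G.adjMatrix R + 1) w (v j) * f j = 0) :
    IsPathSolution (d + 1) (pathNbrs G d v x) a f where
  subset := fun _ hi => (mem_pathNbrs.mp hi).1
  apply_zero := hf 0 (by simp)
  apply_add_one := hf (d + 2) (by simp)
  add_sum := by
    have h := hrow x
    simp only [adjMatrix_add_one_apply, true_or, ite_true, one_mul, boole_mul] at h
    rw [pathNbrs, Finset.sum_filter]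
    convert h using 3 with j hj
    simp [hx j hj]
  add_add_add i hi := by
    have hi₁ : i + 1 ∈ Finset.Icc 1 (d + 1) := Finset.mem_Icc.mpr ⟨by omega, by omega⟩
    have h := hrow (v (i + 1))
    simp only [adjMatrix_add_one_apply, boole_mul] at h
    have hx' : (if v (i + 1) = x ∨ G.Adj (v (i + 1)) x then a else 0) =
        if i + 1 ∈ pathNbrs G d v x then a else 0 := by
      simp [mem_pathNbrs, hi₁, (hx _ hi₁).symm, G.adj_comm]
    have hsum : ∑ j ∈ Finset.Icc 1 (d + 1),
        (if v (i + 1) = v j ∨ G.Adj (v (i + 1)) (v j) then f j else 0) =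
        f i + f (i + 1) + f (i + 2) := by
      calc _ = ∑ j ∈ Finset.Icc 1 (d + 1), if j ∈ Finset.Icc i (i + 2) then f j else 0 := by
            refine Finset.sum_congr rfl fun j hj => ?_
            simp only [hv.eq_or_adj_iff hi₁ hj, Finset.mem_Icc]
            split_ifs <;> first | rfl | omega
        _ = ∑ j ∈ Finset.Icc i (i + 2), f j := by
            rw [Finset.sum_ite_mem]
            exact Finset.sum_subset Finset.inter_subset_right fun j _ hj => hf j fun hj' =>
              hj (Finset.mem_inter.mpr ⟨hj', ‹_›⟩)
        _ = f i + f (i + 1) + f (i + 2) := by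
            rw [Finset.sum_Icc_succ_top (by omega), Finset.sum_Icc_succ_top (by omega),
              Finset.Icc_self, Finset.sum_singleton]
    rwa [hx', hsum, add_comm] at h

end IsGeodesicOn

end SimpleGraph

theorem stmt_7_general {V : Type*} [Fintype V] (G : SimpleGraph V) (n d : ℕ)
    (hcard : Fintype.card V = n)
    (hcanon : ∀ a b : V, (∀ z : V, (z = a ∨ G.Adj a z) ↔ (z = b ∨ G.Adj b z)) → a = b)
    (hd3 : d % 3 = 2)
    (v : ℕ → V)
    (hpath : ∀ i ∈ Finset.Icc 1 (d + 1), ∀ j ∈ Finset.Icc 1 (d + 1),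
      G.dist (v i) (v j) = max i j - min i j)
    (hmult : multNegOne G = n - d - 1)
    (x : V) (hxP : ∀ i ∈ Finset.Icc 1 (d + 1), x ≠ v i) :
    (pathNbrs G d v x).card ≠ 1 ∧ (pathNbrs G d v x).card = 2 := by
  have hv : G.IsGeodesicOn (Finset.Icc 1 (d + 1)) v := hpath
  have hm : (d + 1) % 3 = 0 := by omega
  have hIcc : ∀ {i}, i ∈ Finset.Icc 1 (d + 1) → i ≤ d + 1 + 1 := fun hi =>
    (Finset.mem_Icc.mp hi).2.trans (Nat.le_succ _)
  obtain ⟨a, f, hnontriv, hf, hrow⟩ := (G.adjMatrix ℝ + 1).exists_forall_mul_add_sum_eq_zero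
    hv.injOn hxP (by rw [Nat.card_Icc, hcard]; unfold multNegOne at hmult; omega)
  have hs := hv.isPathSolution_pathNbrs hxP hf hrow
  have h₁ : ¬ (pathNbrs G d v x).card ≤ 1 := fun h =>
    have ha := hs.eq_zero_of_card_le_one hm h
    hnontriv ⟨ha, fun i hi => hs.eq_zero_of_eq_zero hm ha (hIcc hi)⟩
  have hnonempty : (pathNbrs G d v x).Nonempty := Finset.card_pos.mp (by omega)
  obtain ⟨p, hp⟩ := Finset.exists_subset_Icc_of_forall_le_add hnonempty
    fun i hi j hj => hv.le_add_two_of_mem_pathNbrs hi hj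
  have h₃ : (pathNbrs G d v x).card ≠ 3 := by
    intro h₃
    have hN : pathNbrs G d v x = Finset.Icc p (p + 2) :=
      Finset.eq_of_subset_of_card_le hp (by rw [Nat.card_Icc, h₃]; omega)
    have hf' := fun i (hi : i ∈ Finset.Icc 1 (d + 1)) => hs.eq_ite_of_eq_Icc hm hN (hIcc hi)
    have ha : a ≠ 0 := fun ha => hnontriv ⟨ha, fun i hi => by simp [hf' i hi, ha]⟩
    have hp₁ : p + 1 ∈ Finset.Icc 1 (d + 1) :=
      hs.subset (hN ▸ Finset.mem_Icc.mpr ⟨by omega, by omega⟩)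
    have hcol := Matrix.apply_eq_apply_of_forall_mul_add_sum_eq_zero _ hp₁ ha hf' hrow
    exact hxP _ hp₁ (hcanon _ _ (G.eq_or_adj_iff_of_adjMatrix_add_one_apply_eq hcol))
  have h₂ := Finset.card_le_card hp
  simp only [Nat.card_Icc] at h₂
  omega

theorem stmt_7 {V : Type*} [Fintype V] (G : SimpleGraph V) (n d : ℕ)
    (hconn : G.Connected)
    (hcard : Fintype.card V = n)
    (hcanon : ∀ a b : V, (∀ z : V, (z = a ∨ G.Adj a z) ↔ (z = b ∨ G.Adj b z)) → a = b)
    (hd3 : d % 3 = 2)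
    (hdiam : ∀ a b : V, G.dist a b ≤ d)
    (v : ℕ → V)
    (hpath : ∀ i ∈ Finset.Icc 1 (d + 1), ∀ j ∈ Finset.Icc 1 (d + 1),
      G.dist (v i) (v j) = max i j - min i j)
    (hmult : multNegOne G = n - d - 1)
    (x : V) (hxP : ∀ i ∈ Finset.Icc 1 (d + 1), x ≠ v i) :
    (pathNbrs G d v x).card ≠ 1 ∧ (pathNbrs G d v x).card = 2 :=
  stmt_7_general G n d hcard hcanon hd3 v hpath hmult x hxP
end
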